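/- arXiv:2407.07739 — 3 statements merged into one kernel-verified Lean document; each statement's English description precedes it below -/
import Mathlib

section
/- Let H be a real inner product space, L ≥ 0, and f : H → ℝ a differentiable function whose gradient satisfies ‖∇f(x) − ∇f(y)‖ ≤ L·‖x − y‖ for all x, y ∈ H. If η > 0 satisfies η·L ≤ 1, then for every w, g ∈ H: f(w − η·g) ≤ f(w) − (η/2)·‖∇f(w)‖² + (η/2)·‖∇f(w) − g‖². -/
open intervalIntegral

/-- Descent-type inequality for a function with `L`-Lipschitz gradient:
if `η·L ≤ 1` then `f (w − η·g) ≤ f w − (η/2)·‖∇f w‖² + (η/2)·‖∇f w − g‖²`. -/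
theorem descent_lemma_unbiased
    {H : Type*} [NormedAddCommGroup H] [InnerProductSpace ℝ H] [CompleteSpace H]
    (f : H → ℝ) (gradf : H → H)
    (hgrad : ∀ x, HasGradientAt f (gradf x) x)
    (L : ℝ) (hL : 0 ≤ L)
    (hLip : ∀ x y, ‖gradf x - gradf y‖ ≤ L * ‖x - y‖)
    (η : ℝ) (hη : 0 < η) (hηL : η * L ≤ 1)
    (w g : H) :
    f (w - η • g) ≤ f w - (η / 2) * ‖gradf w‖ ^ 2 + (η / 2) * ‖gradf w - g‖ ^ 2 := by
  set v : H := -(η • g) with hv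
  -- continuity of the gradient
  have hcont : Continuous gradf := by
    refine (LipschitzWith.of_dist_le_mul (K := ⟨L, hL⟩) ?_).continuous
    intro x y
    rw [dist_eq_norm, dist_eq_norm]; exact hLip x y
  -- derivative along the line
  have hline : ∀ t : ℝ, HasDerivAt (fun t : ℝ => w + t • v) v t := fun t => by
    simpa using ((hasDerivAt_id t).smul_const v).const_add w
  have hφ : ∀ t : ℝ, HasDerivAt (fun t : ℝ => f (w + t • v))
      (inner ℝ (gradf (w + t • v)) v : ℝ) t := by
    intro t
    have h1 := ((hgrad (w + t • v)).hasFDerivAt).comp_hasDerivAt t (hline t)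
    exact h1
  have hlinecont : Continuous fun t : ℝ => w + t • v :=
    continuous_const.add (continuous_id.smul continuous_const)
  have hφ'cont : Continuous fun t : ℝ => (inner ℝ (gradf (w + t • v)) v : ℝ) :=
    (hcont.comp hlinecont).inner continuous_const
  -- FTC
  have hFTC : (∫ t in (0:ℝ)..1, (inner ℝ (gradf (w + t • v)) v : ℝ)) = f (w + v) - f w := by
    have := intervalIntegral.integral_eq_sub_of_hasDerivAt
      (f := fun t : ℝ => f (w + t • v))
      (f' := fun t : ℝ => (inner ℝ (gradf (w + t • v)) v : ℝ))
      (a := 0) (b := 1) (fun t _ => hφ t)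
      (hφ'cont.intervalIntegrable 0 1)
    simpa using this
  -- bound the integral
  have hbound : (∫ t in (0:ℝ)..1, (inner ℝ (gradf (w + t • v)) v : ℝ))
      ≤ inner ℝ (gradf w) v + L * ‖v‖ ^ 2 / 2 := by
    have hmono : (∫ t in (0:ℝ)..1, (inner ℝ (gradf (w + t • v)) v : ℝ))
        ≤ ∫ t in (0:ℝ)..1, ((inner ℝ (gradf w) v : ℝ) + (L * ‖v‖ ^ 2) * t) := by
      refine intervalIntegral.integral_mono_on (by norm_num)
        (hφ'cont.intervalIntegrable 0 1)
        ((continuous_const.add (continuous_const.mul continuous_id)).intervalIntegrable 0 1) ?_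
      intro t ht
      have h1 : (inner ℝ (gradf (w + t • v)) v : ℝ) - inner ℝ (gradf w) v
          = inner ℝ (gradf (w + t • v) - gradf w) v := by
        rw [inner_sub_left]
      have h2 : (inner ℝ (gradf (w + t • v) - gradf w) v : ℝ)
          ≤ ‖gradf (w + t • v) - gradf w‖ * ‖v‖ := real_inner_le_norm _ _
      have h3 : ‖gradf (w + t • v) - gradf w‖ ≤ L * (t * ‖v‖) := by
        have := hLip (w + t • v) w
        simpa [norm_smul, abs_of_nonneg ht.1] using this
      nlinarith [norm_nonneg v, mul_le_mul_of_nonneg_right h3 (norm_nonneg v)]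
    have hval : (∫ t in (0:ℝ)..1, ((inner ℝ (gradf w) v : ℝ) + (L * ‖v‖ ^ 2) * t))
        = inner ℝ (gradf w) v + L * ‖v‖ ^ 2 / 2 := by
      have hint : IntervalIntegrable (fun t : ℝ => (L * ‖v‖ ^ 2) * t)
          MeasureTheory.volume 0 1 := Continuous.intervalIntegrable (continuous_const.mul continuous_id) 0 1
      rw [intervalIntegral.integral_add intervalIntegrable_const hint,
        intervalIntegral.integral_const_mul, integral_id]
      norm_num
      ring
    linarith [hmono, hval.le, hmono.trans hval.le]
  have hkey : f (w + v) ≤ f w + inner ℝ (gradf w) v + L * ‖v‖ ^ 2 / 2 := by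
    linarith [hFTC ▸ hbound]
  -- algebra
  have hwv : w + v = w - η • g := by rw [hv]; abel
  rw [hwv] at hkey
  have hiv : (inner ℝ (gradf w) v : ℝ) = -(η * inner ℝ (gradf w) g) := by
    rw [hv, inner_neg_right, real_inner_smul_right]
  have hnv : ‖v‖ ^ 2 = η ^ 2 * ‖g‖ ^ 2 := by
    rw [hv, norm_neg, norm_smul, Real.norm_eq_abs, abs_of_pos hη, mul_pow]
  have hsq : ‖gradf w - g‖ ^ 2 = ‖gradf w‖ ^ 2 - 2 * inner ℝ (gradf w) g + ‖g‖ ^ 2 := by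
    rw [norm_sub_sq_real]
  rw [hiv, hnv] at hkey
  have hLg : L * (η ^ 2 * ‖g‖ ^ 2) ≤ η * ‖g‖ ^ 2 := by
    nlinarith [sq_nonneg ‖g‖, hη.le]
  rw [hsq]
  nlinarith [hkey, hLg]
end

section
/- Let H be a real inner product space, n ≥ 1, and for each k = 1, …, n let p_k ≥ 0 with Σ_{k=1}^n p_k = 1, let I_k be a Bernoulli random variable with P(I_k = 1) = P_k ∈ (0, 1], and let X_k be a square-integrable H-valued random vector with E‖X_k‖² ≤ A² such that, for each k, I_k is independent of X_k. Then E‖Σ_{k=1}^n p_k·((I_k/P_k) − 1)·X_k‖² ≤ Σ_{k=1}^n p_k·(1/P_k − 1)·A². -/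
open MeasureTheory ProbabilityTheory
open scoped ENNReal

/-- Weighted sum of per-index unbiased Bernoulli-scaled vectors: if for each `k`
the indicator `I_k` is Bernoulli with mean `P_k ∈ (0,1]` and independent of the
square-integrable vector `X_k` with `E‖X_k‖² ≤ A²`, then
`E‖Σ p_k·((I_k/P_k) − 1)·X_k‖² ≤ Σ p_k·(1/P_k − 1)·A²`. -/
theorem weighted_bernoulli_unbias_bound
    {H : Type*} [NormedAddCommGroup H] [InnerProductSpace ℝ H]
    [MeasurableSpace H] [BorelSpace H]
    {Ω : Type*} [MeasureSpace Ω] [IsProbabilityMeasure (ℙ : Measure Ω)]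
    (n : ℕ) (hn : 1 ≤ n)
    (p : Fin n → ℝ) (hp : ∀ k, 0 ≤ p k) (hpsum : ∑ k, p k = 1)
    (P : Fin n → ℝ) (hP : ∀ k, P k ∈ Set.Ioc (0 : ℝ) 1)
    (I : Fin n → Ω → ℝ) (X : Fin n → Ω → H)
    (hImeas : ∀ k, Measurable (I k)) (hXmeas : ∀ k, Measurable (X k))
    (hIval : ∀ k ω, I k ω = 0 ∨ I k ω = 1)
    (hIP : ∀ k, (ℙ : Measure Ω) {ω | I k ω = 1} = ENNReal.ofReal (P k))
    (hX2 : ∀ k, MemLp (X k) 2 ℙ)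
    (A : ℝ)
    (hXA : ∀ k, ∫ ω, ‖X k ω‖ ^ 2 ≤ A ^ 2)
    (hindep : ∀ k, IndepFun (I k) (X k)) :
    ∫ ω, ‖∑ k, p k • ((I k ω / P k - 1) • X k ω)‖ ^ 2
      ≤ ∑ k, p k * (1 / P k - 1) * A ^ 2 := by
  have hP0 : ∀ k, 0 < P k := fun k => (hP k).1
  have hP1 : ∀ k, P k ≤ 1 := fun k => (hP k).2
  have hPinv : ∀ k, 1 ≤ 1 / P k := fun k => one_le_one_div (hP0 k) (hP1 k)
  -- integrability of ‖X k‖²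
  have hX2int : ∀ k, Integrable (fun ω => ‖X k ω‖ ^ 2) ℙ := by
    intro k
    have h := (hX2 k).integrable_norm_rpow two_ne_zero ENNReal.ofNat_ne_top
    have : ((2 : ℝ≥0∞).toReal) = ((2 : ℕ) : ℝ) := by norm_num
    simpa [this, Real.rpow_natCast] using h
  -- I k as an indicator, its integrability and integral
  have hIind : ∀ k, Integrable (I k) ℙ ∧ ∫ ω, I k ω = P k := by
    intro k
    have hs : MeasurableSet {ω | I k ω = 1} := hImeas k (measurableSet_singleton 1)
    have hIeq : I k = Set.indicator {ω | I k ω = 1} (fun _ => (1 : ℝ)) := by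
      funext ω
      rcases hIval k ω with h | h <;> simp [Set.indicator, h]
    constructor
    · rw [hIeq]; exact (integrable_const (1 : ℝ)).indicator hs
    · rw [hIeq, integral_indicator_const _ hs, measureReal_def, hIP k,
        ENNReal.toReal_ofReal (hP0 k).le, smul_eq_mul, mul_one]
  -- rewrite (I/P - 1)² as affine in I
  have hsqeq : ∀ k, (fun ω => (I k ω / P k - 1) ^ 2)
      = fun ω => (1 / (P k) ^ 2 - 2 / P k) * I k ω + 1 := by
    intro k
    funext ω
    rcases hIval k ω with h | h
    · rw [h]; norm_num
    · rw [h]; have hk := (hP0 k).ne'; field_simp; ring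
  have hIsqint : ∀ k, Integrable (fun ω => (I k ω / P k - 1) ^ 2) ℙ := by
    intro k
    rw [hsqeq k]
    exact (((hIind k).1).const_mul _).add (integrable_const 1)
  have hIsqval : ∀ k, ∫ ω, (I k ω / P k - 1) ^ 2 = 1 / P k - 1 := by
    intro k
    rw [hsqeq k, integral_add (((hIind k).1).const_mul _) (integrable_const 1),
      integral_const_mul, (hIind k).2, integral_const]
    have hPk := hP0 k
    simp only [probReal_univ, measure_univ, ENNReal.toReal_one, smul_eq_mul, mul_one, one_mul]
    field_simp
    ring
  -- integrability of the products g k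
  have hIsqmeas : ∀ k, Measurable (fun ω => (I k ω / P k - 1) ^ 2) := by
    intro k
    exact (((hImeas k).div_const (P k)).sub measurable_const).pow_const 2
  have hgint : ∀ k, Integrable (fun ω => (I k ω / P k - 1) ^ 2 * ‖X k ω‖ ^ 2) ℙ := by
    intro k
    refine (hX2int k).bdd_mul (hIsqmeas k).aestronglyMeasurable (c := (1 / P k) ^ 2) (Filter.Eventually.of_forall fun ω => ?_)
    rw [Real.norm_eq_abs, abs_of_nonneg (sq_nonneg _)]
    rcases hIval k ω with h | h <;> rw [h]
    · rw [zero_div]; nlinarith [hPinv k]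
    · nlinarith [hPinv k]
  -- independence of the squared factors
  have hindep2 : ∀ k, IndepFun (fun ω => (I k ω / P k - 1) ^ 2)
      (fun ω => ‖X k ω‖ ^ 2) ℙ := by
    intro k
    exact (hindep k).comp (((measurable_id.div_const (P k)).sub measurable_const).pow_const 2)
      (measurable_norm.pow_const 2)
  have hgval : ∀ k, ∫ ω, (I k ω / P k - 1) ^ 2 * ‖X k ω‖ ^ 2
      = (1 / P k - 1) * ∫ ω, ‖X k ω‖ ^ 2 := by
    intro k
    rw [(hindep2 k).integral_fun_mul_eq_mul_integral (hIsqint k).1 (hX2int k).1, hIsqval k]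
  -- pointwise convexity bound
  have hpt : ∀ ω, ‖∑ k, p k • ((I k ω / P k - 1) • X k ω)‖ ^ 2
      ≤ ∑ k, p k * ((I k ω / P k - 1) ^ 2 * ‖X k ω‖ ^ 2) := by
    intro ω
    have h1 : ‖∑ k, p k • ((I k ω / P k - 1) • X k ω)‖
        ≤ ∑ k, p k * ‖(I k ω / P k - 1) • X k ω‖ := by
      refine (norm_sum_le _ _).trans (le_of_eq (Finset.sum_congr rfl fun k _ => ?_))
      rw [norm_smul, Real.norm_eq_abs, abs_of_nonneg (hp k)]
    calc ‖∑ k, p k • ((I k ω / P k - 1) • X k ω)‖ ^ 2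
        ≤ (∑ k, p k * ‖(I k ω / P k - 1) • X k ω‖) ^ 2 :=
          pow_le_pow_left₀ (norm_nonneg _) h1 2
      _ ≤ ∑ k, p k * ‖(I k ω / P k - 1) • X k ω‖ ^ 2 :=
          Real.pow_arith_mean_le_arith_mean_pow _ _ _ (fun k _ => hp k)
            (by simpa using hpsum) (fun k _ => norm_nonneg _) 2
      _ = ∑ k, p k * ((I k ω / P k - 1) ^ 2 * ‖X k ω‖ ^ 2) := by
          refine Finset.sum_congr rfl fun k _ => ?_
          rw [norm_smul, mul_pow, Real.norm_eq_abs, sq_abs]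
  calc ∫ ω, ‖∑ k, p k • ((I k ω / P k - 1) • X k ω)‖ ^ 2
      ≤ ∫ ω, ∑ k, p k * ((I k ω / P k - 1) ^ 2 * ‖X k ω‖ ^ 2) := by
        refine integral_mono_of_nonneg (Filter.Eventually.of_forall fun ω => sq_nonneg _)
          (integrable_finset_sum _ fun k _ => ((hgint k).const_mul _))
          (Filter.Eventually.of_forall hpt)
    _ = ∑ k, p k * ((1 / P k - 1) * ∫ ω, ‖X k ω‖ ^ 2) := by
        rw [integral_finset_sum _ fun k _ => ((hgint k).const_mul _)]
        exact Finset.sum_congr rfl fun k _ => by rw [integral_const_mul, hgval k]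
    _ ≤ ∑ k, p k * (1 / P k - 1) * A ^ 2 := by
        refine Finset.sum_le_sum fun k _ => ?_
        rw [mul_assoc]
        have h1 : (0:ℝ) ≤ 1 / P k - 1 := by linarith [hPinv k]
        have h2 : (1 / P k - 1) * (∫ ω, ‖X k ω‖ ^ 2) ≤ (1 / P k - 1) * A ^ 2 :=
          mul_le_mul_of_nonneg_left (hXA k) h1
        exact mul_le_mul_of_nonneg_left h2 (hp k)
end

section
/- Let V be uniformly distributed on the closed disk of radius R > 0 centered at the origin in ℝ², let x₀ ∈ ℝ² with 0 < ‖x₀‖ = ρ ≤ R, and let h ≥ 0. Define D = √(‖V − x₀‖² + h²), w_m = √((R − ρ)² + h²), w_p = √((R + ρ)² + h²) and d = √(R² + h²). Then D has probability density f(r) = 2r/R² for h ≤ r ≤ w_m, f(r) = (2r/(π·R²))·arccos((r² + ρ² − d²)/(2ρ·√(r² − h²))) for w_m < r ≤ w_p, and f(r) = 0 otherwise. -/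
open MeasureTheory ProbabilityTheory Real Set

lemma lintegral_polar (g : ℝ × ℝ → ENNReal) :
    ∫⁻ p, g p = ∫⁻ p in polarCoord.target, ENNReal.ofReal p.1 * g (polarCoord.symm p) := by
  set B : ℝ × ℝ → ℝ × ℝ →L[ℝ] ℝ × ℝ := fun p =>
    LinearMap.toContinuousLinearMap (Matrix.toLin (Module.Basis.finTwoProd ℝ) (Module.Basis.finTwoProd ℝ)
      !![Real.cos p.2, -p.1 * Real.sin p.2; Real.sin p.2, p.1 * Real.cos p.2]) with hB
  have hder : ∀ p ∈ polarCoord.target,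
      HasFDerivWithinAt (⇑polarCoord.symm) (B p) polarCoord.target p := fun p _ =>
    (hasFDerivAt_polarCoord_symm p).hasFDerivWithinAt
  have B_det : ∀ p, (B p).det = p.1 := by
    intro p
    conv_rhs => rw [← one_mul p.1, ← cos_sq_add_sin_sq p.2]
    simp only [hB, neg_mul, LinearMap.det_toContinuousLinearMap, LinearMap.det_toLin,
      Matrix.det_fin_two_of, sub_neg_eq_add]
    ring
  have hinj : Set.InjOn (⇑polarCoord.symm) polarCoord.target := by
    have := polarCoord.symm.injOn
    rwa [OpenPartialHomeomorph.symm_source] at this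
  calc ∫⁻ p, g p = ∫⁻ p in polarCoord.source, g p := by
        rw [← setLIntegral_univ]
        exact (setLIntegral_congr polarCoord_source_ae_eq_univ).symm
    _ = ∫⁻ p in ⇑polarCoord.symm '' polarCoord.target, g p := by
        rw [polarCoord.symm_image_target_eq_source]
    _ = ∫⁻ p in polarCoord.target, ENNReal.ofReal |(B p).det| * g (polarCoord.symm p) :=
        lintegral_image_eq_lintegral_abs_det_fderiv_mul volume
          polarCoord.open_target.measurableSet hder hinj g
    _ = _ := by
        refine setLIntegral_congr_fun polarCoord.open_target.measurableSet
          (fun p hp => ?_)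
        rw [B_det, abs_of_pos]
        rw [polarCoord_target] at hp
        exact hp.1

lemma angle_measure (t : ℝ) :
    volume {θ : ℝ | θ ∈ Ioo (-π) π ∧ Real.cos θ ≤ t}
      = ENNReal.ofReal (2 * Real.arccos (-t)) := by
  rcases lt_or_ge t (-1) with ht | ht
  · have hs : {θ : ℝ | θ ∈ Ioo (-π) π ∧ Real.cos θ ≤ t} = ∅ := by
      ext θ
      simp only [mem_setOf_eq, mem_empty_iff_false, iff_false, not_and]
      intro _
      push_neg
      have := Real.neg_one_le_cos θ
      linarith
    rw [hs, measure_empty, Real.arccos_eq_zero.mpr (by linarith), mul_zero, ENNReal.ofReal_zero]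
  rcases le_or_gt 1 t with ht1 | ht1
  · have hs : {θ : ℝ | θ ∈ Ioo (-π) π ∧ Real.cos θ ≤ t} = Ioo (-π) π := by
      ext θ
      simp only [mem_setOf_eq, and_iff_left_iff_imp]
      exact fun _ => le_trans (Real.cos_le_one θ) ht1
    rw [hs, Real.volume_Ioo, Real.arccos_eq_pi.mpr (by linarith)]
    congr 1
    ring
  · set a := Real.arccos t with ha
    have ha0 : 0 < a := Real.arccos_pos.mpr ht1
    have haπ : a ≤ π := Real.arccos_le_pi t
    have hcos : Real.cos a = t := Real.cos_arccos ht ht1.le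
    have hπ : 0 < π := Real.pi_pos
    have hs : {θ : ℝ | θ ∈ Ioo (-π) π ∧ Real.cos θ ≤ t}
        = Ioc (-π) (-a) ∪ Ico a π := by
      ext θ
      simp only [mem_setOf_eq, mem_Ioo, mem_union, mem_Ioc, mem_Ico]
      constructor
      · rintro ⟨⟨h1, h2⟩, hc⟩
        rcases le_or_gt 0 θ with hθ | hθ
        · right
          refine ⟨?_, h2⟩
          by_contra hlt
          push_neg at hlt
          have := Real.strictAntiOn_cos ⟨hθ, h2.le⟩ ⟨ha0.le, haπ⟩ hlt
          linarith
        · left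
          refine ⟨h1, ?_⟩
          by_contra hlt
          push_neg at hlt
          have h2' : -θ ≤ π := by linarith
          have := Real.strictAntiOn_cos ⟨by linarith, h2'⟩ ⟨ha0.le, haπ⟩ (by linarith)
          rw [Real.cos_neg] at this
          linarith
      · rintro (⟨h1, h2⟩ | ⟨h1, h2⟩)
        · have hθ0 : θ ≤ 0 := by linarith
          refine ⟨⟨h1, by linarith⟩, ?_⟩
          have : Real.cos (-θ) ≤ Real.cos a :=
            Real.cos_le_cos_of_nonneg_of_le_pi ha0.le (by linarith) (by linarith)
          rw [Real.cos_neg, hcos] at this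
          exact this
        · refine ⟨⟨by linarith, h2⟩, ?_⟩
          have : Real.cos θ ≤ Real.cos a :=
            Real.cos_le_cos_of_nonneg_of_le_pi ha0.le h2.le h1
          rwa [hcos] at this
    rw [hs, measure_union ?_ measurableSet_Ico, Real.volume_Ioc, Real.volume_Ico,
      ← ENNReal.ofReal_add (by linarith) (by linarith), Real.arccos_neg]
    · congr 1
      ring
    · rw [Set.disjoint_left]
      rintro θ ⟨_, hθ1⟩ ⟨hθ2, _⟩
      linarith

lemma sqrt_image {h : ℝ} (hh : 0 ≤ h) :
    (fun s : ℝ => Real.sqrt (s ^ 2 + h ^ 2)) '' Ioi 0 = Ioi h := by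
  ext r
  simp only [mem_image, mem_Ioi]
  constructor
  · rintro ⟨s, hs, rfl⟩
    calc h = Real.sqrt (h ^ 2) := (Real.sqrt_sq hh).symm
      _ < Real.sqrt (s ^ 2 + h ^ 2) := Real.sqrt_lt_sqrt (sq_nonneg h) (by nlinarith)
  · intro hr
    have hr0 : 0 ≤ r := le_trans hh hr.le
    refine ⟨Real.sqrt (r ^ 2 - h ^ 2), Real.sqrt_pos.mpr (by nlinarith), ?_⟩
    rw [Real.sq_sqrt (by nlinarith)]
    rw [show r ^ 2 - h ^ 2 + h ^ 2 = r ^ 2 by ring, Real.sqrt_sq hr0]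

lemma sqrt_hasDeriv {h : ℝ} {s : ℝ} (hs : 0 < s) :
    HasDerivAt (fun s : ℝ => Real.sqrt (s ^ 2 + h ^ 2))
      (s / Real.sqrt (s ^ 2 + h ^ 2)) s := by
  have h1 : HasDerivAt (fun s : ℝ => s ^ 2 + h ^ 2) (2 * s) s := by
    simpa using (hasDerivAt_pow 2 s).add_const (h ^ 2)
  have h2 : s ^ 2 + h ^ 2 ≠ 0 := by positivity
  have := (Real.hasDerivAt_sqrt h2).comp s h1
  refine this.congr_deriv ?_
  have hpos : 0 < Real.sqrt (s ^ 2 + h ^ 2) := Real.sqrt_pos.mpr (by positivity)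
  ring

lemma norm2 (v : EuclideanSpace ℝ (Fin 2)) : ‖v‖ = Real.sqrt (v 0 ^ 2 + v 1 ^ 2) := by
  rw [EuclideanSpace.norm_eq]
  simp [Fin.sum_univ_two, Real.norm_eq_abs, sq_abs]

lemma lintegral_image_1d {s : Set ℝ} {f f' : ℝ → ℝ} (hs : MeasurableSet s)
    (hf' : ∀ x ∈ s, HasDerivWithinAt f (f' x) s x) (hf : Set.InjOn f s) (g : ℝ → ENNReal) :
    ∫⁻ x in f '' s, g x = ∫⁻ x in s, ENNReal.ofReal |f' x| * g (f x) := by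
  simpa only [ContinuousLinearMap.det_toSpanSingleton] using
    lintegral_image_eq_lintegral_abs_det_fderiv_mul volume hs
      (fun x hx => (hf' x hx).hasFDerivWithinAt) hf g

set_option maxHeartbeats 2000000 in
/-- Distance distribution from a height-`h` point above a location `x₀` (at
horizontal distance `ρ` from the center) to a uniform point `V` on the disk of
radius `R`: `D = √(‖V − x₀‖² + h²)` has density `2r/R²` on `[h, w_m]`,
`(2r/(πR²))·arccos((r² + ρ² − d²)/(2ρ√(r² − h²)))` on `(w_m, w_p]`, and `0`
elsewhere, where `w_m = √((R−ρ)² + h²)`, `w_p = √((R+ρ)² + h²)`, `d = √(R² + h²)`. -/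
theorem uniform_disk_offset_distance_distribution
    {Ω : Type*} [MeasureSpace Ω] [IsProbabilityMeasure (ℙ : Measure Ω)]
    (R : ℝ) (hR : 0 < R) (h : ℝ) (hh : 0 ≤ h)
    (x₀ : EuclideanSpace ℝ (Fin 2)) (ρ : ℝ) (hρ : ρ = ‖x₀‖)
    (hρpos : 0 < ρ) (hρR : ρ ≤ R)
    (wm wp d : ℝ)
    (hwm : wm = Real.sqrt ((R - ρ) ^ 2 + h ^ 2))
    (hwp : wp = Real.sqrt ((R + ρ) ^ 2 + h ^ 2))
    (hd : d = Real.sqrt (R ^ 2 + h ^ 2))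
    (V : Ω → EuclideanSpace ℝ (Fin 2)) (hVmeas : Measurable V)
    (hVlaw : Measure.map V ℙ
      = (volume (Metric.closedBall (0 : EuclideanSpace ℝ (Fin 2)) R))⁻¹
          • volume.restrict (Metric.closedBall (0 : EuclideanSpace ℝ (Fin 2)) R)) :
    Measure.map (fun ω => Real.sqrt (‖V ω - x₀‖ ^ 2 + h ^ 2)) ℙ
      = volume.withDensity (fun r =>
          ENNReal.ofReal
            (if h ≤ r ∧ r ≤ wm then 2 * r / R ^ 2
             else if wm < r ∧ r ≤ wp then
               2 * r / (Real.pi * R ^ 2)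
                 * Real.arccos ((r ^ 2 + ρ ^ 2 - d ^ 2) / (2 * ρ * Real.sqrt (r ^ 2 - h ^ 2)))
             else 0)) := by
  classical
  have hπ : (0:ℝ) < π := Real.pi_pos
  -- basic facts about the constants
  have hd2 : d ^ 2 = R ^ 2 + h ^ 2 := by rw [hd]; exact Real.sq_sqrt (by positivity)
  have hwm2 : wm ^ 2 = (R - ρ) ^ 2 + h ^ 2 := by rw [hwm]; exact Real.sq_sqrt (by positivity)
  have hwp2 : wp ^ 2 = (R + ρ) ^ 2 + h ^ 2 := by rw [hwp]; exact Real.sq_sqrt (by positivity)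
  have hwm0 : 0 ≤ wm := by rw [hwm]; exact Real.sqrt_nonneg _
  have hwp0 : 0 ≤ wp := by rw [hwp]; exact Real.sqrt_nonneg _
  have hwmh : h ≤ wm := by
    rw [hwm]
    calc h = Real.sqrt (h ^ 2) := (Real.sqrt_sq hh).symm
      _ ≤ Real.sqrt ((R - ρ) ^ 2 + h ^ 2) := Real.sqrt_le_sqrt (by nlinarith [sq_nonneg (R - ρ)])
  -- the distance function
  set g : EuclideanSpace ℝ (Fin 2) → ℝ :=
    fun v => Real.sqrt (‖v - x₀‖ ^ 2 + h ^ 2) with hgdef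
  have hgmeas : Measurable g := by
    rw [hgdef]; fun_prop
  have hmm : Measure.map (fun ω => Real.sqrt (‖V ω - x₀‖ ^ 2 + h ^ 2)) ℙ
      = (volume (Metric.closedBall (0 : EuclideanSpace ℝ (Fin 2)) R))⁻¹
          • Measure.map g (volume.restrict (Metric.closedBall (0 : EuclideanSpace ℝ (Fin 2)) R)) := by
    rw [show (fun ω => Real.sqrt (‖V ω - x₀‖ ^ 2 + h ^ 2)) = g ∘ V from rfl,
      ← Measure.map_map hgmeas hVmeas, hVlaw, Measure.map_smul]
  rw [hmm]
  have hvol : volume (Metric.closedBall (0 : EuclideanSpace ℝ (Fin 2)) R)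
      = ENNReal.ofReal (π * R ^ 2) := by
    rw [EuclideanSpace.volume_closedBall]
    simp only [Fintype.card_fin]
    rw [show ((2:ℕ):ℝ) / 2 + 1 = 2 by norm_num, Real.Gamma_two,
      Real.sq_sqrt hπ.le, div_one, ← ENNReal.ofReal_pow hR.le,
      ← ENNReal.ofReal_mul (by positivity)]
    rw [mul_comm]
  ext A hA
  rw [Measure.smul_apply, smul_eq_mul, Measure.map_apply hgmeas hA,
    Measure.restrict_apply (hgmeas hA), withDensity_apply _ hA, hvol]
  -- the rotation
  set x₁ : EuclideanSpace ℝ (Fin 2) := EuclideanSpace.single 0 ρ with hx₁def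
  have hx₁ : ‖x₁‖ = ρ := by
    rw [hx₁def, EuclideanSpace.norm_single, Real.norm_eq_abs, abs_of_pos hρpos]
  set O := Submodule.reflection (Submodule.span ℝ {x₁ - x₀})ᗮ with hOdef
  have hO : O x₁ = x₀ := Submodule.reflection_sub (by rw [hx₁, hρ])
  have hOmp : MeasurePreserving (⇑O) volume volume := O.measurePreserving
  -- the coordinate map
  set q : ℝ × ℝ → EuclideanSpace ℝ (Fin 2) :=
    fun p => MeasurableEquiv.toLp 2 (Fin 2 → ℝ)
      ((MeasurableEquiv.finTwoArrow).symm p) with hqdef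
  have hqmp : MeasurePreserving q volume volume :=
    ((EuclideanSpace.volume_preserving_symm_measurableEquiv_toLp (Fin 2)).symm _).comp
      ((volume_preserving_finTwoArrow ℝ).symm _)
  -- the intermediate sets
  set S₁ : Set (EuclideanSpace ℝ (Fin 2)) :=
    {u | Real.sqrt (‖u - x₁‖ ^ 2 + h ^ 2) ∈ A ∧ ‖u‖ ≤ R} with hS₁def
  set S₂ : Set (ℝ × ℝ) :=
    {p | Real.sqrt ((p.1 - ρ) ^ 2 + p.2 ^ 2 + h ^ 2) ∈ A ∧ p.1 ^ 2 + p.2 ^ 2 ≤ R ^ 2} with hS₂def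
  set S₃ : Set (ℝ × ℝ) :=
    {p | Real.sqrt (p.1 ^ 2 + p.2 ^ 2 + h ^ 2) ∈ A ∧ (p.1 + ρ) ^ 2 + p.2 ^ 2 ≤ R ^ 2} with hS₃def
  have hSmeas : MeasurableSet (g ⁻¹' A ∩ Metric.closedBall 0 R) :=
    (hgmeas hA).inter Metric.isClosed_closedBall.measurableSet
  have hS₁meas : MeasurableSet S₁ := by
    rw [hS₁def, Set.setOf_and]
    exact ((by fun_prop : Measurable fun u : EuclideanSpace ℝ (Fin 2) =>
      Real.sqrt (‖u - x₁‖ ^ 2 + h ^ 2)) hA).inter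
        (measurableSet_le (by fun_prop) measurable_const)
  have hS₂meas : MeasurableSet S₂ := by
    rw [hS₂def, Set.setOf_and]
    exact ((by fun_prop : Measurable fun p : ℝ × ℝ =>
      Real.sqrt ((p.1 - ρ) ^ 2 + p.2 ^ 2 + h ^ 2)) hA).inter
        (measurableSet_le (by fun_prop) measurable_const)
  have hS₃meas : MeasurableSet S₃ := by
    rw [hS₃def, Set.setOf_and]
    exact ((by fun_prop : Measurable fun p : ℝ × ℝ =>
      Real.sqrt (p.1 ^ 2 + p.2 ^ 2 + h ^ 2)) hA).inter
        (measurableSet_le (by fun_prop) measurable_const)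
  -- Step 1 : rotation
  have step1 : volume (g ⁻¹' A ∩ Metric.closedBall 0 R) = volume S₁ := by
    have hpre : ⇑O ⁻¹' (g ⁻¹' A ∩ Metric.closedBall 0 R) = S₁ := by
      ext u
      have e1 : ‖O u - x₀‖ = ‖u - x₁‖ := by
        rw [← hO, ← map_sub, O.norm_map]
      simp only [Set.mem_preimage, Set.mem_inter_iff, hS₁def, Set.mem_setOf_eq,
        Metric.mem_closedBall, dist_zero_right, hgdef, e1, O.norm_map]
    rw [← hOmp.measure_preimage hSmeas.nullMeasurableSet, hpre]
  -- Step 2 : coordinates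
  have step2 : volume S₁ = volume S₂ := by
    have hpre : q ⁻¹' S₁ = S₂ := by
      ext p
      have c0 : (q p) 0 = p.1 := rfl
      have c1 : (q p) 1 = p.2 := rfl
      have n1 : ‖q p - x₁‖ ^ 2 = (p.1 - ρ) ^ 2 + p.2 ^ 2 := by
        rw [norm2, Real.sq_sqrt (by positivity)]
        have d0 : (q p - x₁) 0 = p.1 - ρ := by
          simp [PiLp.sub_apply, c0, hx₁def, EuclideanSpace.single_apply]
        have d1 : (q p - x₁) 1 = p.2 := by
          simp [PiLp.sub_apply, c1, hx₁def, EuclideanSpace.single_apply]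
        rw [d0, d1]
      have n2 : ‖q p‖ ≤ R ↔ p.1 ^ 2 + p.2 ^ 2 ≤ R ^ 2 := by
        rw [norm2, c0, c1, Real.sqrt_le_left hR.le]
      simp only [Set.mem_preimage, hS₁def, hS₂def, Set.mem_setOf_eq, n1, n2]
    rw [← hqmp.measure_preimage hS₁meas.nullMeasurableSet, hpre]
  -- Step 3 : translation
  have step3 : volume S₂ = volume S₃ := by
    rw [← measure_preimage_add volume ((ρ, 0) : ℝ × ℝ) S₂]
    congr 1
    ext p
    simp only [Set.mem_preimage, hS₂def, hS₃def, Set.mem_setOf_eq, Prod.fst_add, Prod.snd_add,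
      add_sub_cancel_left, add_sub_cancel_right, zero_add, add_comm ρ p.1]
  -- Step 4 : polar coordinates
  have step4 : volume S₃ = ∫⁻ s in Set.Ioi (0:ℝ),
      (if Real.sqrt (s ^ 2 + h ^ 2) ∈ A then ENNReal.ofReal s else 0) *
        ENNReal.ofReal (2 * Real.arccos ((s ^ 2 + ρ ^ 2 - R ^ 2) / (2 * ρ * s))) := by
    have hmeasF : Measurable (fun p : ℝ × ℝ =>
        (if Real.sqrt (p.1 ^ 2 + h ^ 2) ∈ A then ENNReal.ofReal p.1 else 0) *
          (if Real.cos p.2 ≤ (R ^ 2 - ρ ^ 2 - p.1 ^ 2) / (2 * ρ * p.1) then (1:ENNReal) else 0)) := by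
      apply Measurable.mul
      · exact Measurable.ite ((by fun_prop : Measurable fun p : ℝ × ℝ =>
          Real.sqrt (p.1 ^ 2 + h ^ 2)) hA) measurable_fst.ennreal_ofReal measurable_const
      · exact Measurable.ite (measurableSet_le (by fun_prop) (by fun_prop))
          measurable_const measurable_const
    rw [← lintegral_indicator_one hS₃meas, lintegral_polar (S₃.indicator 1)]
    have hcong : ∀ p ∈ polarCoord.target,
        ENNReal.ofReal p.1 * S₃.indicator 1 (polarCoord.symm p)
          = (if Real.sqrt (p.1 ^ 2 + h ^ 2) ∈ A then ENNReal.ofReal p.1 else 0) *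
            (if Real.cos p.2 ≤ (R ^ 2 - ρ ^ 2 - p.1 ^ 2) / (2 * ρ * p.1) then 1 else 0) := by
      intro p hp
      rw [polarCoord_target] at hp
      have hp1 : 0 < p.1 := hp.1
      have e1 : (p.1 * Real.cos p.2) ^ 2 + (p.1 * Real.sin p.2) ^ 2 + h ^ 2
          = p.1 ^ 2 + h ^ 2 := by
        linear_combination (p.1 ^ 2) * (Real.sin_sq_add_cos_sq p.2)
      have e2 : ((p.1 * Real.cos p.2 + ρ) ^ 2 + (p.1 * Real.sin p.2) ^ 2 ≤ R ^ 2)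
          ↔ Real.cos p.2 ≤ (R ^ 2 - ρ ^ 2 - p.1 ^ 2) / (2 * ρ * p.1) := by
        rw [le_div_iff₀ (by positivity)]
        constructor <;> intro hx <;> nlinarith [Real.sin_sq_add_cos_sq p.2]
      have hmem : (polarCoord.symm p ∈ S₃)
          ↔ (Real.sqrt (p.1 ^ 2 + h ^ 2) ∈ A ∧
              Real.cos p.2 ≤ (R ^ 2 - ρ ^ 2 - p.1 ^ 2) / (2 * ρ * p.1)) := by
        rw [hS₃def]
        simp only [polarCoord_symm_apply, Set.mem_setOf_eq]
        rw [e1, e2]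
      rw [Set.indicator_apply, if_congr hmem rfl rfl]
      by_cases hc1 : Real.sqrt (p.1 ^ 2 + h ^ 2) ∈ A <;>
        by_cases hc2 : Real.cos p.2 ≤ (R ^ 2 - ρ ^ 2 - p.1 ^ 2) / (2 * ρ * p.1) <;>
        simp [hc1, hc2]
    rw [setLIntegral_congr_fun polarCoord.open_target.measurableSet
      hcong]
    rw [polarCoord_target, Measure.volume_eq_prod, ← Measure.prod_restrict]
    rw [lintegral_prod _ hmeasF.aemeasurable]
    refine lintegral_congr fun s => ?_
    rw [lintegral_const_mul' (if Real.sqrt (s ^ 2 + h ^ 2) ∈ A then ENNReal.ofReal s else 0)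
      _ (by split_ifs <;> simp)]
    have hind : (fun θ : ℝ => if Real.cos θ ≤ (R ^ 2 - ρ ^ 2 - s ^ 2) / (2 * ρ * s)
          then (1:ENNReal) else 0)
        = Set.indicator {θ : ℝ | Real.cos θ ≤ (R ^ 2 - ρ ^ 2 - s ^ 2) / (2 * ρ * s)}
            (1 : ℝ → ENNReal) := by
      funext θ
      simp [Set.indicator_apply]
    have hmc : MeasurableSet {θ : ℝ | Real.cos θ ≤ (R ^ 2 - ρ ^ 2 - s ^ 2) / (2 * ρ * s)} :=
      measurableSet_le (by fun_prop) measurable_const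
    rw [hind, lintegral_indicator_one hmc, Measure.restrict_apply hmc]
    have hseteq : {θ : ℝ | Real.cos θ ≤ (R ^ 2 - ρ ^ 2 - s ^ 2) / (2 * ρ * s)}
          ∩ Set.Ioo (-π) π
        = {θ : ℝ | θ ∈ Set.Ioo (-π) π ∧
            Real.cos θ ≤ (R ^ 2 - ρ ^ 2 - s ^ 2) / (2 * ρ * s)} := by
      ext θ
      simp only [Set.mem_inter_iff, Set.mem_setOf_eq]
      exact and_comm
    rw [hseteq, angle_measure,
      show -((R ^ 2 - ρ ^ 2 - s ^ 2) / (2 * ρ * s)) = (s ^ 2 + ρ ^ 2 - R ^ 2) / (2 * ρ * s)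
        by ring]
  -- Step 5 : one-dimensional substitution
  have step5 : (∫⁻ s in Set.Ioi (0:ℝ),
      (if Real.sqrt (s ^ 2 + h ^ 2) ∈ A then ENNReal.ofReal s else 0) *
        ENNReal.ofReal (2 * Real.arccos ((s ^ 2 + ρ ^ 2 - R ^ 2) / (2 * ρ * s))))
      = ∫⁻ r in Set.Ioi h,
          (if r ∈ A then ENNReal.ofReal r else 0) *
            ENNReal.ofReal (2 * Real.arccos
              ((r ^ 2 + ρ ^ 2 - d ^ 2) / (2 * ρ * Real.sqrt (r ^ 2 - h ^ 2)))) := by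
    have hder : ∀ s ∈ Set.Ioi (0:ℝ), HasDerivWithinAt (fun s => Real.sqrt (s ^ 2 + h ^ 2))
        (s / Real.sqrt (s ^ 2 + h ^ 2)) (Set.Ioi 0) s :=
      fun s hs => (sqrt_hasDeriv hs).hasDerivWithinAt
    have hinj : Set.InjOn (fun s => Real.sqrt (s ^ 2 + h ^ 2)) (Set.Ioi 0) := by
      intro a ha b hb hab
      simp only at hab
      have h2 := (Real.sqrt_inj (by positivity) (by positivity)).mp hab
      have ha' := Set.mem_Ioi.mp ha
      have hb' := Set.mem_Ioi.mp hb
      have hab2 : a ^ 2 = b ^ 2 := by linarith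
      calc a = Real.sqrt (a ^ 2) := (Real.sqrt_sq ha'.le).symm
        _ = Real.sqrt (b ^ 2) := by rw [hab2]
        _ = b := Real.sqrt_sq hb'.le
    rw [← sqrt_image hh, lintegral_image_1d measurableSet_Ioi hder hinj]
    refine setLIntegral_congr_fun measurableSet_Ioi
      (fun s hs => ?_)
    have hs0 : (0:ℝ) < s := hs
    have hφpos : 0 < Real.sqrt (s ^ 2 + h ^ 2) := Real.sqrt_pos.mpr (by positivity)
    have e3 : Real.sqrt (s ^ 2 + h ^ 2) ^ 2 = s ^ 2 + h ^ 2 := Real.sq_sqrt (by positivity)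
    have e4 : (Real.sqrt (s ^ 2 + h ^ 2) ^ 2 + ρ ^ 2 - d ^ 2) /
          (2 * ρ * Real.sqrt (Real.sqrt (s ^ 2 + h ^ 2) ^ 2 - h ^ 2))
        = (s ^ 2 + ρ ^ 2 - R ^ 2) / (2 * ρ * s) := by
      rw [e3, hd2, show s ^ 2 + h ^ 2 - h ^ 2 = s ^ 2 by ring, Real.sqrt_sq hs0.le]
      ring
    rw [abs_of_nonneg (div_nonneg hs0.le (Real.sqrt_nonneg _)), e4]
    by_cases hc : Real.sqrt (s ^ 2 + h ^ 2) ∈ A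
    · have e5 : ENNReal.ofReal (s / Real.sqrt (s ^ 2 + h ^ 2)) *
          ENNReal.ofReal (Real.sqrt (s ^ 2 + h ^ 2)) = ENNReal.ofReal s := by
        rw [← ENNReal.ofReal_mul (by positivity), div_mul_cancel₀ _ (ne_of_gt hφpos)]
      rw [if_pos hc, if_pos hc, ← mul_assoc, e5]
    · rw [if_neg hc, if_neg hc]
      simp
  rw [step1, step2, step3, step4, step5]
  have hcne : (ENNReal.ofReal (π * R ^ 2))⁻¹ ≠ ⊤ :=
    ENNReal.inv_ne_top.mpr (ENNReal.ofReal_pos.mpr (by positivity)).ne'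
  rw [← lintegral_const_mul' _ _ hcne, ← lintegral_indicator measurableSet_Ioi,
    ← lintegral_indicator hA]
  refine lintegral_congr_ae ?_
  have hae : ∀ᵐ (r : ℝ) ∂volume, r ≠ h := by
    rw [ae_iff]
    simp only [ne_eq, not_not, Set.setOf_eq_eq_singleton]
    exact Real.volume_singleton
  filter_upwards [hae] with r hrh
  by_cases hrA : r ∈ A
  · rcases lt_trichotomy r h with hlt | heq | hgt
    · rw [Set.indicator_of_notMem
          (by simp only [Set.mem_Ioi, not_lt]; exact hlt.le : r ∉ Set.Ioi h),
        Set.indicator_of_mem hrA]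
      rw [if_neg (by rintro ⟨h1, -⟩; linarith), if_neg (by rintro ⟨h1, -⟩; linarith)]
      simp
    · exact absurd heq hrh
    · rw [Set.indicator_of_mem (Set.mem_Ioi.mpr hgt), Set.indicator_of_mem hrA, if_pos hrA]
      have hr0 : 0 < r := lt_of_le_of_lt hh hgt
      set sr := Real.sqrt (r ^ 2 - h ^ 2) with hsrdef
      have hsr0 : 0 < sr := Real.sqrt_pos.mpr (by nlinarith)
      have hsr2 : sr ^ 2 = r ^ 2 - h ^ 2 := Real.sq_sqrt (by nlinarith)
      have hL : (ENNReal.ofReal (π * R ^ 2))⁻¹ * (ENNReal.ofReal r *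
            ENNReal.ofReal (2 * Real.arccos ((r ^ 2 + ρ ^ 2 - d ^ 2) / (2 * ρ * sr))))
          = ENNReal.ofReal (r * (2 * Real.arccos ((r ^ 2 + ρ ^ 2 - d ^ 2) / (2 * ρ * sr)))
              / (π * R ^ 2)) := by
        rw [ENNReal.ofReal_div_of_pos (by positivity), ENNReal.div_eq_inv_mul,
          ENNReal.ofReal_mul hr0.le]
      rw [hL]
      congr 1
      split_ifs with h1 h2
      · have hrwm : r ≤ wm := h1.2
        have hsle : sr ≤ R - ρ := by nlinarith [hwm0, hr0.le]
        have hu : (r ^ 2 + ρ ^ 2 - d ^ 2) / (2 * ρ * sr) ≤ -1 := by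
          rw [div_le_iff₀ (by positivity)]
          nlinarith [mul_nonneg (sub_nonneg.mpr (show sr + ρ ≤ R by linarith))
            (show (0:ℝ) ≤ R + (sr + ρ) by positivity)]
        rw [Real.arccos_eq_pi.mpr hu]
        field_simp
      · ring
      · push_neg at h1 h2
        have hwmr : wm < r := h1 hgt.le
        have hwpr : wp < r := h2 hwmr
        have hsgt : R + ρ < sr := by nlinarith [hwp0]
        have hu : 1 ≤ (r ^ 2 + ρ ^ 2 - d ^ 2) / (2 * ρ * sr) := by
          rw [le_div_iff₀ (by positivity)]
          nlinarith [mul_pos (show (0:ℝ) < sr - ρ - R by linarith)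
            (show (0:ℝ) < sr - ρ + R by linarith)]
        rw [Real.arccos_eq_zero.mpr hu]
        ring
  · simp [Set.indicator_apply, hrA]
end
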